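/- arXiv:2106.09847 — 3 statements merged into one kernel-verified Lean document; each statement's English description precedes it below -/
import Mathlib

section
/- Let e_h > 0, let F : [0, e_h] → ℝ be continuous with F(e_h) = 0, and let G : [0, e_h] → ℝ be continuous with G(e) > 0 for all e ∈ [0, e_h]. Suppose the set T = { e ∈ [0, e_h] : F(e) ≥ G(e) } is nonempty. Then ê = sup T satisfies ê < e_h. Consequently, if e^* ≥ e_h, then ê < e^*: the platform's optimal stable effort ê is guaranteed to fall strictly short of the socially optimal effort e^* unless the public model overreacts to harm by requiring effort e_h > e^*. -/
/-- **Proposition `ancillary-result`.**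
Let `e_h > 0`, let `F : [0, e_h] → ℝ` be continuous with `F e_h = 0`, and let
`G : [0, e_h] → ℝ` be continuous with `G e > 0` for all `e ∈ [0, e_h]`.  Suppose
the set `T = { e ∈ [0, e_h] | F e ≥ G e }` is nonempty.  Then `ê = sup T`
satisfies `ê < e_h`.  Consequently, if `e* ≥ e_h` then `ê < e*`: the platform's
optimal stable effort falls strictly short of the socially optimal effort `e*`
unless the public model overreacts by requiring `e_h > e*`. -/
theorem stable_effort_strictly_below_backlash
    (e_h : ℝ) (he_h : 0 < e_h)
    (F G : ℝ → ℝ)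
    (hF_cont : ContinuousOn F (Set.Icc 0 e_h)) (hF_eh : F e_h = 0)
    (hG_cont : ContinuousOn G (Set.Icc 0 e_h))
    (hG_pos : ∀ e ∈ Set.Icc (0 : ℝ) e_h, 0 < G e)
    (hT : {e : ℝ | e ∈ Set.Icc (0 : ℝ) e_h ∧ G e ≤ F e}.Nonempty) :
    sSup {e : ℝ | e ∈ Set.Icc (0 : ℝ) e_h ∧ G e ≤ F e} < e_h ∧
      ∀ estar : ℝ, e_h ≤ estar →
        sSup {e : ℝ | e ∈ Set.Icc (0 : ℝ) e_h ∧ G e ≤ F e} < estar := by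
  set T := {e : ℝ | e ∈ Set.Icc (0 : ℝ) e_h ∧ G e ≤ F e} with hTdef
  have heh_mem : e_h ∈ Set.Icc (0 : ℝ) e_h := Set.right_mem_Icc.2 he_h.le
  -- H = G - F is continuous on Icc, positive at e_h
  have hH_cont : ContinuousOn (fun e => G e - F e) (Set.Icc 0 e_h) :=
    hG_cont.sub hF_cont
  have hH_eh : 0 < G e_h - F e_h := by
    rw [hF_eh]; simpa using hG_pos e_h heh_mem
  have hcwa := hH_cont e_h heh_mem
  rw [Metric.continuousWithinAt_iff] at hcwa
  obtain ⟨δ, hδpos, hδ⟩ := hcwa (G e_h - F e_h) hH_eh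
  -- every x ∈ T satisfies x ≤ e_h - δ
  have hbound : ∀ x ∈ T, x ≤ e_h - δ := by
    intro x hx
    obtain ⟨hx1, hx2⟩ := hx
    by_contra hcon
    push_neg at hcon
    have hdist : dist x e_h < δ := by
      rw [Real.dist_eq, abs_lt]
      constructor <;> [linarith [hx1.2]; linarith [hx1.2]]
    have := hδ hx1 hdist
    rw [Real.dist_eq, abs_lt] at this
    linarith [this.1]
  have hsup : sSup T ≤ e_h - δ := csSup_le hT hbound
  have h1 : sSup T < e_h := lt_of_le_of_lt hsup (by linarith)
  exact ⟨h1, fun estar hes => lt_of_lt_of_le h1 hes⟩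
end

section
/- Let h : [0, ∞) → ℝ be differentiable, convex, strictly decreasing (h' < 0), with values in (0,1], and let D > 0. Then for every candidate required effort e_c ≥ 0 there exists a differentiable cost function c : [0, ∞) → ℝ with c' > 0 and strictly convex, such that the expected social welfare EW(e) = -h(e)·D - c(e) attains a unique maximum over [0, ∞) at some e* with e* ≠ e_c. Hence no rule that sets the public model's required effort purely as a function of the harm function h and the damage cost D, without regard to the platform's cost function c, can always incentivize the socially optimal level of effort. -/
/-!
Put the optimum anywhere we like, say at `e⋆ = e_c + 1`, and choose the cost
`c e = A · exp (e - e⋆)` with `A = -D h'(e⋆) > 0`: it is increasing and strictly convex, and its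
marginal cost at `e⋆` equals the marginal benefit `-D h'(e⋆)`. Bounding `D h` below by its tangent
at `e⋆` and `exp t` below by `1 + t`, strictly for `t ≠ 0`, shows that `e⋆` is the unique maximizer
of the welfare `-D h - c`.
-/

open Real Set

namespace ConvexOn

variable {S : Set ℝ} {f : ℝ → ℝ} {f' x y : ℝ}

lemma add_deriv_mul_sub_le (hf : ConvexOn ℝ S f) (hx : x ∈ S) (hy : y ∈ S)
    (hf' : HasDerivWithinAt f f' S x) : f x + f' * (y - x) ≤ f y := by
  rcases lt_trichotomy x y with hxy | rfl | hyx
  · have hslope := hf.le_slope_of_hasDerivWithinAt hx hy hxy hf'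
    rw [slope_def_field, le_div_iff₀ (sub_pos.2 hxy)] at hslope
    linarith
  · simp
  · have hslope := hf.slope_le_of_hasDerivWithinAt hy hx hyx hf'
    rw [slope_def_field, div_le_iff₀ (sub_pos.2 hyx)] at hslope
    linarith

lemma sub_lt_sub_mul_exp_sub (hf : ConvexOn ℝ S f) (hx : x ∈ S) (hy : y ∈ S)
    (hf' : HasDerivWithinAt f f' S x) (hf'_neg : f' < 0) (hyx : y ≠ x) :
    f x - f' < f y - f' * exp (y - x) := by
  have htangent := hf.add_deriv_mul_sub_le hx hy hf'
  have hexp : f' * exp (y - x) < f' * (y - x + 1) :=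
    mul_lt_mul_of_neg_left (add_one_lt_exp (sub_ne_zero.2 hyx)) hf'_neg
  linarith

end ConvexOn

lemma hasDerivAt_const_mul_exp_sub (A x e : ℝ) :
    HasDerivAt (fun e ↦ A * exp (e - x)) (A * exp (e - x)) e := by
  simpa using (((hasDerivAt_id e).sub_const x).exp).const_mul A

lemma strictConvexOn_const_mul_exp_sub {A : ℝ} (hA : 0 < A) (x : ℝ) :
    StrictConvexOn ℝ univ fun e ↦ A * exp (e - x) := by
  refine StrictMonoOn.strictConvexOn_of_deriv convex_univ (by fun_prop) ?_
  rw [funext fun e ↦ (hasDerivAt_const_mul_exp_sub A x e).deriv]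
  intro a _ b _ hab
  exact mul_lt_mul_of_pos_left (exp_lt_exp.2 (sub_lt_sub_right hab x)) hA

theorem no_cost_free_rule_is_always_optimal_general
    (h h' : ℝ → ℝ)
    (hhder : ∀ e ∈ Set.Ici (0 : ℝ), HasDerivWithinAt h (h' e) (Set.Ici 0) e)
    (hhconv : ConvexOn ℝ (Set.Ici 0) h)
    (hh'neg : ∀ e ∈ Set.Ici (0 : ℝ), h' e < 0)
    (D : ℝ) (hD : 0 < D)
    (e_c : ℝ) (he_c : 0 ≤ e_c) :
    ∃ c c' : ℝ → ℝ,
      (∀ e ∈ Set.Ici (0 : ℝ), HasDerivWithinAt c (c' e) (Set.Ici 0) e) ∧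
      (∀ e ∈ Set.Ici (0 : ℝ), 0 < c' e) ∧
      StrictConvexOn ℝ (Set.Ici 0) c ∧
      ∃ estar ∈ Set.Ici (0 : ℝ), estar ≠ e_c ∧
        ∀ e ∈ Set.Ici (0 : ℝ), e ≠ estar →
          -h e * D - c e < -h estar * D - c estar := by
  set estar := e_c + 1
  have hestar : estar ∈ Ici (0 : ℝ) := by simp only [mem_Ici, estar]; linarith
  have hDh'_neg : D * h' estar < 0 := mul_neg_of_pos_of_neg hD (hh'neg estar hestar)
  set A := -(D * h' estar)
  have hA : 0 < A := neg_pos.2 hDh'_neg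
  refine ⟨fun e ↦ A * exp (e - estar), fun e ↦ A * exp (e - estar),
    fun e _ ↦ (hasDerivAt_const_mul_exp_sub A estar e).hasDerivWithinAt, fun e _ ↦ by positivity,
    (strictConvexOn_const_mul_exp_sub hA estar).subset (subset_univ _) (convex_Ici 0),
    estar, hestar, by simp [estar], fun e he hne ↦ ?_⟩
  have hwelfare := (hhconv.smul hD.le).sub_lt_sub_mul_exp_sub hestar he
    ((hhder estar hestar).const_mul D) hDh'_neg hne
  simp only [smul_eq_mul, sub_self, exp_zero, mul_one] at hwelfare ⊢
  linarith

/-- **Proposition `impossbility-result`.**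
Let `h : [0,∞) → ℝ` be differentiable, convex, strictly decreasing (`h' < 0`),
with values in `(0,1]`, and let `D > 0`.  Then for every candidate required
effort `e_c ≥ 0` there exists a differentiable cost function `c : [0,∞) → ℝ`
with `c' > 0` and strictly convex, such that the expected social welfare
`EW e = -h e * D - c e` attains a unique maximum over `[0,∞)` at some
`e* ≠ e_c`.  Hence no rule setting the required effort purely as a function of
`h` and `D`, without regard to `c`, always incentivizes the socially optimal
effort. -/
theorem no_cost_free_rule_is_always_optimal
    (h h' : ℝ → ℝ)
    (hhder : ∀ e ∈ Set.Ici (0 : ℝ), HasDerivWithinAt h (h' e) (Set.Ici 0) e)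
    (hhconv : ConvexOn ℝ (Set.Ici 0) h)
    (hh'neg : ∀ e ∈ Set.Ici (0 : ℝ), h' e < 0)
    (hhval : ∀ e ∈ Set.Ici (0 : ℝ), h e ∈ Set.Ioc (0 : ℝ) 1)
    (D : ℝ) (hD : 0 < D)
    (e_c : ℝ) (he_c : 0 ≤ e_c) :
    ∃ c c' : ℝ → ℝ,
      (∀ e ∈ Set.Ici (0 : ℝ), HasDerivWithinAt c (c' e) (Set.Ici 0) e) ∧
      (∀ e ∈ Set.Ici (0 : ℝ), 0 < c' e) ∧
      StrictConvexOn ℝ (Set.Ici 0) c ∧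
      ∃ estar ∈ Set.Ici (0 : ℝ), estar ≠ e_c ∧
        ∀ e ∈ Set.Ici (0 : ℝ), e ≠ estar →
          -h e * D - c e < -h estar * D - c estar :=
  no_cost_free_rule_is_always_optimal_general h h' hhder hhconv hh'neg D hD e_c he_c
end

section
/- Let c, h : ℝ → ℝ be differentiable functions with c strictly convex and c' > 0 everywhere, and h convex with h' < 0 everywhere. Then for all real numbers e_1 < ê, we have (c(e_1) - c(ê)) / (h(e_1) - h(ê)) > c'(ê) / h'(ê). -/
/-- **Case 2 inequality of the main theorem's proof.**
Let `c, h : ℝ → ℝ` be differentiable with `c` strictly convex and `c' > 0`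
everywhere, and `h` convex with `h' < 0` everywhere.  Then for all reals
`e₁ < ê`, `(c e₁ - c ê) / (h e₁ - h ê) > c' ê / h' ê`. -/
theorem secant_slope_ratio_gt_marginal_ratio_below
    (c c' h h' : ℝ → ℝ)
    (hcder : ∀ e, HasDerivAt c (c' e) e) (hc'pos : ∀ e, 0 < c' e)
    (hcconv : StrictConvexOn ℝ Set.univ c)
    (hhder : ∀ e, HasDerivAt h (h' e) e) (hh'neg : ∀ e, h' e < 0)
    (hhconv : ConvexOn ℝ Set.univ h)
    (e₁ ehat : ℝ) (hlt : e₁ < ehat) :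
    (c e₁ - c ehat) / (h e₁ - h ehat) > c' ehat / h' ehat := by
  have hcs : slope c e₁ ehat < c' ehat :=
    hcconv.slope_lt_of_hasDerivAt (Set.mem_univ _) (Set.mem_univ _) hlt (hcder ehat)
  have hhs : slope h e₁ ehat ≤ h' ehat :=
    hhconv.slope_le_of_hasDerivAt (Set.mem_univ _) (Set.mem_univ _) hlt (hhder ehat)
  have hd : (0:ℝ) < ehat - e₁ := by linarith
  rw [slope_def_field, div_lt_iff₀ hd] at hcs
  rw [slope_def_field, div_le_iff₀ hd] at hhs
  -- c ehat - c e₁ < c' ehat * (ehat - e₁)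
  -- h ehat - h e₁ ≤ h' ehat * (ehat - e₁)
  have hnum : c e₁ - c ehat > c' ehat * (e₁ - ehat) := by nlinarith
  have hden : h e₁ - h ehat ≥ h' ehat * (e₁ - ehat) := by nlinarith
  have hdenpos : 0 < h e₁ - h ehat := by nlinarith [hh'neg ehat]
  rw [gt_iff_lt, div_lt_iff_of_neg (hh'neg ehat), div_mul_eq_mul_div, div_lt_iff₀ hdenpos]
  -- c' ehat * (h e₁ - h ehat) ... careful with signs
  nlinarith [hc'pos ehat, hh'neg ehat]
end
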